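/- arXiv:2211.14783 — 5 statements merged into one kernel-verified Lean document; each statement's English description precedes it below -/
import Mathlib

section
/- Let s : ℝⁿ → ℝ and f : ℝⁿ → ℂ be twice differentiable at a point x, let V : ℝⁿ → ℝ, and set c₁ = −ℏ²/(2m), b_c = −iℏ/(2m) with ℏ, m > 0. Define the non-Hermitian Hamiltonian Ĥ^(ri) by Ĥ^(ri)f = c₁ Δf + V f + c₁ |∇s|² f − iℏ b_c (2 ∇s·∇f + f Δs). Then iℏ ŵ^(ri) f (x) := s(x)·(Ĥ^(ri)f)(x) − Ĥ^(ri)(s·f)(x) = −c₁ (2 ∇s(x)·∇f(x) + f(x) Δs(x) + 2 |∇s(x)|² f(x)), i.e. the G-dynamics of type II is ŵ^(ri) = b_c (2∇s·∇ + Δs + 2|∇s|²). -/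
/-
Multiplication by `s` commutes with every term of `Ĥ⁽ʳⁱ⁾` that contains no derivative of `f`, so
only the derivative terms survive in `s Ĥ⁽ʳⁱ⁾f − Ĥ⁽ʳⁱ⁾(sf)`. By the product rule,
`Δ(sf) = sΔf + 2∇s·∇f + fΔs` and `∇s·∇(sf) = s∇s·∇f + |∇s|²f`; inserting these and using
`iℏ b_c = −c₁` leaves `−c₁(2∇s·∇f + fΔs + 2|∇s|²f)`.
-/

open Filter

/-- Partial derivative of a function on `ℝⁿ` in the `i`-th coordinate direction. -/
noncomputable def pd {n : ℕ} {E : Type*} [NormedAddCommGroup E] [NormedSpace ℝ E]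
    (g : (Fin n → ℝ) → E) (i : Fin n) (x : Fin n → ℝ) : E :=
  fderiv ℝ g x (Pi.single i 1)

/-- The non-Hermitian Hamiltonian
`Ĥ⁽ʳⁱ⁾f = c₁Δf + Vf + c₁|∇s|²f − iℏ b_c (2∇s·∇f + fΔs)`,
with `c₁ = −ℏ²/(2m)` and `b_c = −iℏ/(2m)`. -/
noncomputable def Hri {n : ℕ} (ℏ m : ℝ) (s V : (Fin n → ℝ) → ℝ)
    (f : (Fin n → ℝ) → ℂ) (x : Fin n → ℝ) : ℂ :=
  ((-ℏ ^ 2 / (2 * m) : ℝ) : ℂ) * (∑ i, pd (pd f i) i x) + (V x : ℂ) * f x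
    + ((-ℏ ^ 2 / (2 * m) : ℝ) : ℂ) * ((∑ i, (pd s i x) ^ 2 : ℝ) : ℂ) * f x
    - Complex.I * (ℏ : ℂ) * (-Complex.I * ℏ / (2 * m)) *
        (2 * ∑ i, ((pd s i x : ℝ) : ℂ) * pd f i x
          + f x * ((∑ i, pd (pd s i) i x : ℝ) : ℂ))

section PartialDerivatives

variable {n : ℕ} {E : Type*} [NormedAddCommGroup E] [NormedSpace ℝ E]

theorem differentiableAt_pd {g : (Fin n → ℝ) → E} {x : Fin n → ℝ}
    (hg : DifferentiableAt ℝ (fderiv ℝ g) x) (i : Fin n) :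
    DifferentiableAt ℝ (pd g i) x := by
  exact (ContinuousLinearMap.apply ℝ E (Pi.single i 1)).differentiableAt.comp x hg

theorem pd_add {g h : (Fin n → ℝ) → E} {x : Fin n → ℝ}
    (hg : DifferentiableAt ℝ g x) (hh : DifferentiableAt ℝ h x) (i : Fin n) :
    pd (fun y => g y + h y) i x = pd g i x + pd h i x := by
  simp only [pd, fderiv_fun_add hg hh, add_apply]

theorem pd_smul {s : (Fin n → ℝ) → ℝ} {g : (Fin n → ℝ) → E} {x : Fin n → ℝ}
    (hs : DifferentiableAt ℝ s x) (hg : DifferentiableAt ℝ g x) (i : Fin n) :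
    pd (fun y => s y • g y) i x = s x • pd g i x + pd s i x • g x := by
  simp only [pd, fderiv_fun_smul hs hg, add_apply,
    smul_apply, ContinuousLinearMap.smulRight_apply]

theorem pd_pd_smul {s : (Fin n → ℝ) → ℝ} {g : (Fin n → ℝ) → E} {x : Fin n → ℝ}
    (hs : ∀ᶠ y in nhds x, DifferentiableAt ℝ s y) (hs' : DifferentiableAt ℝ (fderiv ℝ s) x)
    (hg : ∀ᶠ y in nhds x, DifferentiableAt ℝ g y) (hg' : DifferentiableAt ℝ (fderiv ℝ g) x)
    (i : Fin n) :
    pd (pd (fun y => s y • g y) i) i x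
      = s x • pd (pd g i) i x + (2 * pd s i x) • pd g i x + pd (pd s i) i x • g x := by
  have hsx := hs.self_of_nhds
  have hgx := hg.self_of_nhds
  have hdsg : pd (fun y => s y • g y) i =ᶠ[nhds x] fun y => s y • pd g i y + pd s i y • g y := by
    filter_upwards [hs, hg] with y hsy hgy using pd_smul hsy hgy i
  have hdg := differentiableAt_pd hg' i
  have hds := differentiableAt_pd hs' i
  calc pd (pd (fun y => s y • g y) i) i x
      = pd (fun y => s y • pd g i y + pd s i y • g y) i x := by
        simp only [pd, hdsg.fderiv_eq]
    _ = s x • pd (pd g i) i x + pd s i x • pd g i x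
          + (pd s i x • pd g i x + pd (pd s i) i x • g x) := by
        rw [pd_add (hsx.fun_smul hdg) (hds.fun_smul hgx), pd_smul hsx hdg, pd_smul hds hgx]
    _ = _ := by
        rw [two_mul, add_smul]
        abel

end PartialDerivatives

theorem stmt_5_general (n : ℕ) (s V : (Fin n → ℝ) → ℝ) (f : (Fin n → ℝ) → ℂ) (x : Fin n → ℝ)
    (hs : ∀ᶠ y in nhds x, DifferentiableAt ℝ s y)
    (hs' : DifferentiableAt ℝ (fderiv ℝ s) x)
    (hf : ∀ᶠ y in nhds x, DifferentiableAt ℝ f y)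
    (hf' : DifferentiableAt ℝ (fderiv ℝ f) x)
    (ℏ m : ℝ) :
    (s x : ℂ) * Hri ℏ m s V f x - Hri ℏ m s V (fun y => (s y : ℂ) * f y) x
      = -((-ℏ ^ 2 / (2 * m) : ℝ) : ℂ) *
          (2 * ∑ i, ((pd s i x : ℝ) : ℂ) * pd f i x
            + f x * ((∑ i, pd (pd s i) i x : ℝ) : ℂ)
            + 2 * ((∑ i, (pd s i x) ^ 2 : ℝ) : ℂ) * f x) := by
  have hsf : (fun y => (s y : ℂ) * f y) = fun y => s y • f y :=
    funext fun y => Complex.real_smul.symm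
  have hgrad : ∑ i, ((pd s i x : ℝ) : ℂ) * pd (fun y => (s y : ℂ) * f y) i x
      = s x * ∑ i, ((pd s i x : ℝ) : ℂ) * pd f i x + ((∑ i, (pd s i x) ^ 2 : ℝ) : ℂ) * f x := by
    simp only [hsf, pd_smul hs.self_of_nhds hf.self_of_nhds, Complex.real_smul]
    push_cast
    simp only [Finset.mul_sum, Finset.sum_mul, ← Finset.sum_add_distrib]
    exact Finset.sum_congr rfl fun i _ => by ring
  have hlap : ∑ i, pd (pd (fun y => (s y : ℂ) * f y) i) i x
      = s x * ∑ i, pd (pd f i) i x + 2 * ∑ i, ((pd s i x : ℝ) : ℂ) * pd f i x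
        + f x * ((∑ i, pd (pd s i) i x : ℝ) : ℂ) := by
    simp only [hsf, pd_pd_smul hs hs' hf hf', Complex.real_smul]
    push_cast
    simp only [Finset.mul_sum, ← Finset.sum_add_distrib]
    exact Finset.sum_congr rfl fun i _ => by ring
  have hc : Complex.I * ℏ * (-Complex.I * ℏ / (2 * m)) = -((-ℏ ^ 2 / (2 * m) : ℝ) : ℂ) := by
    push_cast
    linear_combination (-ℏ ^ 2 / (2 * m) : ℂ) * Complex.I_sq
  simp only [Hri, hgrad, hlap, hc]
  ring

/-- The G-dynamics of type II:
`iℏ ŵ⁽ʳⁱ⁾f (x) = s(x)(Ĥ⁽ʳⁱ⁾f)(x) − Ĥ⁽ʳⁱ⁾(sf)(x)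
  = −c₁(2∇s(x)·∇f(x) + f(x)Δs(x) + 2|∇s(x)|²f(x))`. -/
theorem stmt_5 (n : ℕ) (s V : (Fin n → ℝ) → ℝ) (f : (Fin n → ℝ) → ℂ) (x : Fin n → ℝ)
    (hs : ∀ᶠ y in nhds x, DifferentiableAt ℝ s y)
    (hs' : DifferentiableAt ℝ (fderiv ℝ s) x)
    (hf : ∀ᶠ y in nhds x, DifferentiableAt ℝ f y)
    (hf' : DifferentiableAt ℝ (fderiv ℝ f) x)
    (ℏ m : ℝ) (hℏ : 0 < ℏ) (hm : 0 < m) :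
    (s x : ℂ) * Hri ℏ m s V f x - Hri ℏ m s V (fun y => (s y : ℂ) * f y) x
      = -((-ℏ ^ 2 / (2 * m) : ℝ) : ℂ) *
          (2 * ∑ i, ((pd s i x : ℝ) : ℂ) * pd f i x
            + f x * ((∑ i, pd (pd s i) i x : ℝ) : ℂ)
            + 2 * ((∑ i, (pd s i x) ^ 2 : ℝ) : ℂ) * f x) :=
  stmt_5_general n s V f x hs hs' hf hf' ℏ m
end

section
/- Let ℏ, m > 0, b_c = −iℏ/(2m), a_c = ℏ/m, let u : ℝ → ℝ be continuously differentiable with u(x) > 0 for all x, and let w ∈ ℝ, C₀ ∈ ℂ, x₀ ∈ ℝ. Define ψ(x) = C₀ u(x)^{−1/2} exp( i (w/a_c) ∫_{x₀}^{x} u(t)^{−1} dt ). Then ψ is an eigenfunction of the one-dimensional G-dynamics of type I with eigenvalue w, i.e. b_c (2 u(x) ψ'(x) + u'(x) ψ(x)) = w ψ(x) for all x ∈ ℝ. -/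
/-!
With `Φ' = 1/u`, the amplitude `A = u^{-1/2}` satisfies `A' = -(u'/(2u)) A` and the phase
`E = exp (c Φ)` satisfies `E' = (c/u) E`, so `ψ = C A E` has `ψ' = ((c - u'/2)/u) ψ`. In
`2uψ' + u'ψ` the `u'` terms cancel, leaving `2cψ`; for `c = i w/a_c` one has `b_c · 2c = w`.
-/

open intervalIntegral

noncomputable def wkbAnsatz (C c : ℂ) (u Φ : ℝ → ℝ) (y : ℝ) : ℂ :=
  C * ((u y ^ (-(1 / 2 : ℝ)) : ℝ) : ℂ) * Complex.exp (c * Φ y)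

section

variable {u Φ : ℝ → ℝ} {u' x : ℝ}

theorem hasDerivAt_ofReal_rpow_neg_half (hu : HasDerivAt u u' x) (hux : 0 < u x) :
    HasDerivAt (fun y => ((u y ^ (-(1 / 2 : ℝ)) : ℝ) : ℂ))
      (-(u' / (2 * u x)) * ((u x ^ (-(1 / 2 : ℝ)) : ℝ) : ℂ)) x := by
  convert (hu.rpow_const (p := -(1 / 2 : ℝ)) (Or.inl hux.ne')).ofReal_comp using 1
  rw [Real.rpow_sub_one hux.ne']
  push_cast
  field_simp

theorem hasDerivAt_cexp_mul_ofReal {φ' : ℝ} (hΦ : HasDerivAt Φ φ' x) (c : ℂ) :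
    HasDerivAt (fun y => Complex.exp (c * Φ y)) (c * φ' * Complex.exp (c * Φ x)) x := by
  convert (hΦ.ofReal_comp.const_mul c).cexp using 1
  ring

theorem hasDerivAt_wkbAnsatz (hu : HasDerivAt u u' x) (hux : 0 < u x)
    (hΦ : HasDerivAt Φ (u x)⁻¹ x) (C c : ℂ) :
    HasDerivAt (wkbAnsatz C c u Φ) ((c - u' / 2) / u x * wkbAnsatz C c u Φ x) x := by
  refine (((hasDerivAt_ofReal_rpow_neg_half hu hux).const_mul C).mul
    (hasDerivAt_cexp_mul_ofReal hΦ c)).congr_deriv ?_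
  have : (u x : ℂ) ≠ 0 := Complex.ofReal_ne_zero.mpr hux.ne'
  simp only [wkbAnsatz]
  push_cast
  field_simp
  ring

theorem two_mul_mul_deriv_wkbAnsatz_add (hu : HasDerivAt u u' x) (hux : 0 < u x)
    (hΦ : HasDerivAt Φ (u x)⁻¹ x) (C c : ℂ) :
    2 * (u x : ℂ) * deriv (wkbAnsatz C c u Φ) x + (u' : ℂ) * wkbAnsatz C c u Φ x =
      2 * c * wkbAnsatz C c u Φ x := by
  have : (u x : ℂ) ≠ 0 := Complex.ofReal_ne_zero.mpr hux.ne'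
  rw [(hasDerivAt_wkbAnsatz hu hux hΦ C c).deriv]
  field_simp
  ring

end

/-- `ψ(x) = C₀ u(x)^{−1/2} exp(i(w/a_c)∫_{x₀}^x u⁻¹)` is an eigenfunction of the
one-dimensional G-dynamics of type I `ŵ⁽ᶜˡ⁾ψ = b_c(2uψ' + u'ψ)` with eigenvalue `w`. -/
theorem stmt_9 (ℏ m : ℝ) (hℏ : 0 < ℏ) (hm : 0 < m)
    (b_c : ℂ) (hb_c : b_c = -Complex.I * ℏ / (2 * m))
    (a_c : ℝ) (ha_c : a_c = ℏ / m)
    (u : ℝ → ℝ) (hu : ContDiff ℝ 1 u) (hupos : ∀ x, 0 < u x)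
    (w : ℝ) (C₀ : ℂ) (x₀ : ℝ) (ψ : ℝ → ℂ)
    (hψ : ψ = fun x => C₀ * (((u x) ^ (-(1 / 2 : ℝ)) : ℝ) : ℂ) *
      Complex.exp (Complex.I * ((w / a_c : ℝ) : ℂ) * ((∫ t in x₀..x, (u t)⁻¹ : ℝ) : ℂ))) :
    ∀ x : ℝ, b_c * (2 * (u x : ℂ) * deriv ψ x + ((deriv u x : ℝ) : ℂ) * ψ x) = (w : ℂ) * ψ x := by
  intro x
  have hΦ : HasDerivAt (fun y => ∫ t in x₀..y, (u t)⁻¹) (u x)⁻¹ x :=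
    ((hu.continuous.inv₀ fun t => (hupos t).ne').integral_hasStrictDerivAt x₀ x).hasDerivAt
  have hu' : HasDerivAt u (deriv u x) x := (hu.differentiable one_ne_zero x).hasDerivAt
  have hcoeff : b_c * (2 * (Complex.I * ((w / a_c : ℝ) : ℂ))) = w := by
    have : (ℏ : ℂ) ≠ 0 := Complex.ofReal_ne_zero.mpr hℏ.ne'
    have : (m : ℂ) ≠ 0 := Complex.ofReal_ne_zero.mpr hm.ne'
    rw [hb_c, ha_c]
    push_cast
    field_simp
    linear_combination (-(w : ℂ)) * Complex.I_mul_I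
  have hψ' : ψ = wkbAnsatz C₀ (Complex.I * ((w / a_c : ℝ) : ℂ)) u
      (fun y => ∫ t in x₀..y, (u t)⁻¹) := hψ
  rw [hψ', two_mul_mul_deriv_wkbAnsatz_add hu' (hupos x) hΦ, ← mul_assoc, hcoeff]
end

section
/- Let ℏ, m > 0, a_c = ℏ/m, let u : ℝ → ℝ be twice continuously differentiable with u(x) > 0 for all x, and let w ∈ ℝ, C₀ ∈ ℂ, x₀ ∈ ℝ. Define ψ(x) = C₀ u(x)^{−1/2} exp( i (w/a_c) ∫_{x₀}^{x} u(t)^{−1} dt ). Then for all x ∈ ℝ, −ψ''(x) = ( w²/(a_c² u(x)²) + 2i w u'(x)/(a_c u(x)²) − (3/4) u'(x)²/u(x)² + (1/2) u''(x)/u(x) ) ψ(x). -/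
/-!
With `k = w / a_c`, the fundamental theorem of calculus for the phase gives `ψ' = g ψ` for
`g = -u'/(2u) + i k/u`. Differentiating once more, `ψ'' = (g' + g²) ψ`, and `-(g' + g²)` is
the stated coefficient by field arithmetic.
-/

open intervalIntegral

section SecondDerivative

variable {𝕜 𝔸 : Type*} [NontriviallyNormedField 𝕜] [NormedRing 𝔸] [NormedAlgebra 𝕜 𝔸]

theorem deriv_deriv_eq_of_hasDerivAt_mul_self {ψ g : 𝕜 → 𝔸} {g' : 𝔸} {x : 𝕜}
    (hψ : ∀ y, HasDerivAt ψ (g y * ψ y) y) (hg : HasDerivAt g g' x) :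
    deriv (deriv ψ) x = (g' + g x ^ 2) * ψ x := by
  have hderiv : deriv ψ = g * ψ := funext fun y => (hψ y).deriv
  rw [hderiv, (hg.mul (hψ x)).deriv]
  noncomm_ring

end SecondDerivative

noncomputable section

open Complex

def wkbWave (C₀ : ℂ) (k x₀ : ℝ) (u : ℝ → ℝ) (x : ℝ) : ℂ :=
  C₀ * ((u x ^ (-(1 / 2 : ℝ)) : ℝ) : ℂ) * exp (I * (k : ℂ) * ((∫ t in x₀..x, (u t)⁻¹ : ℝ) : ℂ))

def wkbLogDeriv (k : ℝ) (u : ℝ → ℝ) (x : ℝ) : ℂ :=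
  -((deriv u x : ℝ) : ℂ) / (2 * (u x : ℂ)) + I * k / (u x : ℂ)

variable {u : ℝ → ℝ} {x : ℝ}

theorem hasDerivAt_rpow_neg_half (hu : DifferentiableAt ℝ u x) (hux : u x ≠ 0) :
    HasDerivAt (fun y => u y ^ (-(1 / 2 : ℝ)))
      (-(deriv u x / (2 * u x)) * u x ^ (-(1 / 2 : ℝ))) x := by
  convert hu.hasDerivAt.rpow_const (p := -(1 / 2 : ℝ)) (Or.inl hux) using 1
  rw [Real.rpow_sub_one hux]
  field_simp

theorem hasDerivAt_exp_mul_integral_inv (hu : Continuous u) (hu0 : ∀ y, u y ≠ 0) (k x₀ : ℝ) :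
    HasDerivAt (fun y => exp (I * (k : ℂ) * ((∫ t in x₀..y, (u t)⁻¹ : ℝ) : ℂ)))
      (I * k / u x * exp (I * (k : ℂ) * ((∫ t in x₀..x, (u t)⁻¹ : ℝ) : ℂ))) x := by
  have hinv : Continuous fun t => (u t)⁻¹ := hu.inv₀ hu0
  have hF := (hinv.integral_hasStrictDerivAt x₀ x).hasDerivAt.ofReal_comp.const_mul (I * k)
  convert hF.cexp using 1
  push_cast
  ring

theorem hasDerivAt_wkbWave (hu : Differentiable ℝ u) (hu0 : ∀ y, u y ≠ 0)
    (C₀ : ℂ) (k x₀ : ℝ) :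
    HasDerivAt (wkbWave C₀ k x₀ u) (wkbLogDeriv k u x * wkbWave C₀ k x₀ u x) x := by
  have hamp := ((hasDerivAt_rpow_neg_half (hu x) (hu0 x)).ofReal_comp).const_mul C₀
  have hphase := hasDerivAt_exp_mul_integral_inv (x := x) hu.continuous hu0 k x₀
  refine (hamp.mul hphase).congr_deriv ?_
  simp only [wkbLogDeriv, wkbWave]
  push_cast
  ring

theorem hasDerivAt_wkbLogDeriv (hu : Differentiable ℝ u) (hu' : Differentiable ℝ (deriv u))
    (hu0 : ∀ y, u y ≠ 0) (k : ℝ) :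
    HasDerivAt (wkbLogDeriv k u)
      (-(((deriv (deriv u) x : ℝ) : ℂ) * u x - ((deriv u x : ℝ) : ℂ) ^ 2) / (2 * (u x : ℂ) ^ 2)
        - I * k * ((deriv u x : ℝ) : ℂ) / (u x : ℂ) ^ 2) x := by
  have hux : (u x : ℂ) ≠ 0 := ofReal_ne_zero.mpr (hu0 x)
  have hU := (hu x).hasDerivAt.ofReal_comp
  have hU' := (hu' x).hasDerivAt.ofReal_comp
  have h := ((hU'.neg).div (hU.const_mul 2) (mul_ne_zero two_ne_zero hux)).add
    ((hasDerivAt_const x (I * k)).div hU hux)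
  refine h.congr_deriv ?_
  simp only [Pi.neg_apply]
  field_simp
  ring

theorem neg_add_sq_wkbLogDeriv_eq (k u u' u'' : ℂ) (hu : u ≠ 0) :
    -((-(u'' * u - u' ^ 2) / (2 * u ^ 2) - I * k * u' / u ^ 2) + (-u' / (2 * u) + I * k / u) ^ 2)
      = k ^ 2 / u ^ 2 + 2 * I * (k * u' / u ^ 2) - 3 / 4 * u' ^ 2 / u ^ 2 + 1 / 2 * u'' / u := by
  field_simp
  ring_nf
  simp only [I_sq]
  ring

end

theorem stmt_11_general
    (a_c : ℝ)
    (u : ℝ → ℝ) (hu : ContDiff ℝ 2 u) (hupos : ∀ x, 0 < u x)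
    (w : ℝ) (C₀ : ℂ) (x₀ : ℝ) (ψ : ℝ → ℂ)
    (hψ : ψ = fun x => C₀ * (((u x) ^ (-(1 / 2 : ℝ)) : ℝ) : ℂ) *
      Complex.exp (Complex.I * ((w / a_c : ℝ) : ℂ) * ((∫ t in x₀..x, (u t)⁻¹ : ℝ) : ℂ))) :
    ∀ x : ℝ, -deriv (deriv ψ) x =
      (((w ^ 2 / (a_c ^ 2 * (u x) ^ 2) : ℝ) : ℂ)
        + 2 * Complex.I * ((w * deriv u x / (a_c * (u x) ^ 2) : ℝ) : ℂ)
        - ((3 / 4 * (deriv u x) ^ 2 / (u x) ^ 2 : ℝ) : ℂ)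
        + ((1 / 2 * deriv (deriv u) x / u x : ℝ) : ℂ)) * ψ x := by
  intro x
  have hu0 : ∀ y, u y ≠ 0 := fun y => (hupos y).ne'
  have hu₁ : Differentiable ℝ u := hu.differentiable (by norm_num)
  have hu₂ : Differentiable ℝ (deriv u) := (hu.iterate_deriv' 1 1).differentiable (by norm_num)
  change ψ = wkbWave C₀ (w / a_c) x₀ u at hψ
  subst hψ
  rw [deriv_deriv_eq_of_hasDerivAt_mul_self (fun _ => hasDerivAt_wkbWave hu₁ hu0 C₀ (w / a_c) x₀)
    (hasDerivAt_wkbLogDeriv hu₁ hu₂ hu0 (w / a_c)), ← neg_mul]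
  congr 1
  have := neg_add_sq_wkbLogDeriv_eq ↑(w / a_c) ↑(u x) ↑(deriv u x) ↑(deriv (deriv u) x)
    (Complex.ofReal_ne_zero.mpr (hu0 x))
  rw [wkbLogDeriv, this]
  push_cast
  ring

/-- Second derivative of the eigenfunction `ψ` of the one-dimensional G-dynamics of
type I: `−ψ'' = (w²/(a_c²u²) + 2iwu'/(a_cu²) − (3/4)u'²/u² + (1/2)u''/u)ψ`. -/
theorem stmt_11 (ℏ m : ℝ) (hℏ : 0 < ℏ) (hm : 0 < m)
    (a_c : ℝ) (ha_c : a_c = ℏ / m)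
    (u : ℝ → ℝ) (hu : ContDiff ℝ 2 u) (hupos : ∀ x, 0 < u x)
    (w : ℝ) (C₀ : ℂ) (x₀ : ℝ) (ψ : ℝ → ℂ)
    (hψ : ψ = fun x => C₀ * (((u x) ^ (-(1 / 2 : ℝ)) : ℝ) : ℂ) *
      Complex.exp (Complex.I * ((w / a_c : ℝ) : ℂ) * ((∫ t in x₀..x, (u t)⁻¹ : ℝ) : ℂ))) :
    ∀ x : ℝ, -deriv (deriv ψ) x =
      (((w ^ 2 / (a_c ^ 2 * (u x) ^ 2) : ℝ) : ℂ)
        + 2 * Complex.I * ((w * deriv u x / (a_c * (u x) ^ 2) : ℝ) : ℂ)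
        - ((3 / 4 * (deriv u x) ^ 2 / (u x) ^ 2 : ℝ) : ℂ)
        + ((1 / 2 * deriv (deriv u) x / u x : ℝ) : ℂ)) * ψ x :=
  stmt_11_general a_c u hu hupos w C₀ x₀ ψ hψ
end

section
/- Let ℏ, m > 0, b_c = −iℏ/(2m), a_c = ℏ/m, c_m = −2m/ℏ, let u : ℝ → ℝ be twice continuously differentiable with u(x) > 0 for all x, and let w ∈ ℝ, C₀ ∈ ℂ, x₀ ∈ ℝ. Define ψ(x) = C₀ u(x)^{−1/2} exp( i (w/a_c) ∫_{x₀}^{x} u(t)^{−1} dt ). Then ψ satisfies the eigenvalue equation of the generalized Laplacian −ψ''(x) + i c_m · b_c (2u(x)ψ'(x) + u'(x)ψ(x)) = β(x) ψ(x) for all x, where β(x) = u(x)^{−2} ( w²/a_c² − (3/4) u'(x)² + (1/2) u(x) u''(x) ) + i ( 2 w u'(x)/(a_c u(x)²) − (2m/ℏ) w ). -/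
/-!
The logarithmic derivative of `ψ` is `g = (-u'/2 + i w/a_c)/u`, so `ψ'' = (g' + g²) ψ` and the
eigenvalue equation reduces to an identity between rational expressions in `u, u', u''`. The
G-dynamics term contributes `i c_m b_c (2ug + u') ψ = -(2i w/a_c) ψ`, since `i c_m b_c = -1`.
-/

open intervalIntegral Complex

theorem deriv_deriv_eq_of_forall_hasDerivAt_mul_self {𝕜 𝔸 : Type*} [NontriviallyNormedField 𝕜]
    [NormedCommRing 𝔸] [NormedAlgebra 𝕜 𝔸] {ψ g : 𝕜 → 𝔸} {g' : 𝔸} {x : 𝕜}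
    (hψ : ∀ y, HasDerivAt ψ (g y * ψ y) y) (hg : HasDerivAt g g' x) :
    deriv (deriv ψ) x = (g' + g x ^ 2) * ψ x := by
  have hderiv : deriv ψ = fun y => g y * ψ y := funext fun y => (hψ y).deriv
  rw [hderiv, (hg.fun_mul (hψ x)).deriv]
  ring

theorem hasDerivAt_rpow_neg_half_mul_cexp_integral_inv {u : ℝ → ℝ} (hu : Differentiable ℝ u)
    (hu0 : ∀ x, u x ≠ 0) {C k : ℂ} {x₀ : ℝ} {ψ : ℝ → ℂ}
    (hψ : ψ = fun x => C * ((u x ^ (-(1 / 2) : ℝ) : ℝ) : ℂ) *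
      exp (I * k * ((∫ t in x₀..x, (u t)⁻¹ : ℝ) : ℂ))) (y : ℝ) :
    HasDerivAt ψ ((-(1 / 2) * ((deriv u y : ℝ) : ℂ) + I * k) / u y * ψ y) y := by
  subst hψ
  have hinv : Continuous fun t => (u t)⁻¹ := hu.continuous.inv₀ hu0
  have hpow := ((hu y).hasDerivAt.rpow_const (p := -(1 / 2)) (Or.inl (hu0 y))).ofReal_comp
  have hexp := ((hinv.integral_hasStrictDerivAt x₀ y).hasDerivAt.ofReal_comp.const_mul (I * k)).cexp
  refine ((hpow.const_mul C).mul hexp).congr_deriv ?_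
  rw [Real.rpow_sub_one (hu0 y)]
  push_cast
  field_simp

theorem hasDerivAt_neg_half_deriv_add_const_div {u : ℝ → ℝ} (hu : ContDiff ℝ 2 u) (k : ℂ)
    {x : ℝ} (hx : u x ≠ 0) :
    HasDerivAt (fun y => (-(1 / 2) * ((deriv u y : ℝ) : ℂ) + I * k) / u y)
      ((-(1 / 2) * deriv (deriv u) x * u x - (-(1 / 2) * deriv u x + I * k) * deriv u x)
        / (u x : ℂ) ^ 2) x := by
  have h1 := ((hu.differentiable_deriv_two x).hasDerivAt.ofReal_comp.const_mul
    (-(1 / 2) : ℂ)).add_const (I * k)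
  have h2 := ((hu.differentiable two_ne_zero) x).hasDerivAt.ofReal_comp
  refine (h1.fun_div h2 (by exact_mod_cast hx)).congr_deriv ?_
  ring

/-- The eigenfunction `ψ` of the G-dynamics of type I satisfies the eigenvalue
equation `−ψ'' + i c_m ŵ⁽ᶜˡ⁾ψ = βψ` of the generalized Laplacian of type I, with
`β(x) = u⁻²(w²/a_c² − (3/4)u'² + (1/2)uu'') + i(2wu'/(a_cu²) − (2m/ℏ)w)`. -/
theorem stmt_12 (ℏ m : ℝ) (hℏ : 0 < ℏ) (hm : 0 < m)
    (b_c : ℂ) (hb_c : b_c = -Complex.I * ℏ / (2 * m))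
    (a_c : ℝ) (ha_c : a_c = ℏ / m)
    (c_m : ℝ) (hc_m : c_m = -2 * m / ℏ)
    (u : ℝ → ℝ) (hu : ContDiff ℝ 2 u) (hupos : ∀ x, 0 < u x)
    (w : ℝ) (C₀ : ℂ) (x₀ : ℝ) (ψ : ℝ → ℂ)
    (hψ : ψ = fun x => C₀ * (((u x) ^ (-(1 / 2 : ℝ)) : ℝ) : ℂ) *
      Complex.exp (Complex.I * ((w / a_c : ℝ) : ℂ) * ((∫ t in x₀..x, (u t)⁻¹ : ℝ) : ℂ)))
    (β : ℝ → ℂ)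
    (hβ : β = fun x =>
      (((((u x) ^ 2)⁻¹ * (w ^ 2 / a_c ^ 2 - 3 / 4 * (deriv u x) ^ 2
          + 1 / 2 * u x * deriv (deriv u) x) : ℝ)) : ℂ)
        + Complex.I * ((2 * w * deriv u x / (a_c * (u x) ^ 2) - 2 * m / ℏ * w : ℝ) : ℂ)) :
    ∀ x : ℝ, -deriv (deriv ψ) x
        + Complex.I * (c_m : ℂ) *
          (b_c * (2 * (u x : ℂ) * deriv ψ x + ((deriv u x : ℝ) : ℂ) * ψ x))
      = β x * ψ x := by
  intro x
  have hu0 : ∀ x, u x ≠ 0 := fun x => (hupos x).ne'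
  have hψ' := hasDerivAt_rpow_neg_half_mul_cexp_integral_inv (hu.differentiable two_ne_zero) hu0 hψ
  have hux : (u x : ℂ) ≠ 0 := by exact_mod_cast hu0 x
  have hℏ' : (ℏ : ℂ) ≠ 0 := by exact_mod_cast hℏ.ne'
  have hm' : (m : ℂ) ≠ 0 := by exact_mod_cast hm.ne'
  have hIcb : I * c_m * b_c = -1 := by
    rw [hb_c, hc_m]; push_cast; field_simp; exact I_sq
  rw [deriv_deriv_eq_of_forall_hasDerivAt_mul_self hψ'
      (hasDerivAt_neg_half_deriv_add_const_div hu _ (hu0 x)),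
    (hψ' x).deriv, ← mul_assoc, hIcb, hβ, ha_c]
  push_cast
  field_simp
  -- `i² = -1` in the `(i w/a_c)²` part of `g²`, once denominators are cleared
  linear_combination (-16 * ψ x * w ^ 2 * m ^ 2) * I_sq
end

section
/- Let ℏ, m > 0, b_c = −iℏ/(2m), a_c = ℏ/m, c_m = −2m/ℏ, let u : ℝ → ℝ be twice continuously differentiable with u(x) > 0 for all x, and let w ∈ ℝ, C₀ ∈ ℂ, x₀ ∈ ℝ. Define ψ(x) = C₀ u(x)^{−1/2} exp( i (w/a_c) ∫_{x₀}^{x} u(t)^{−1} dt ). Then ψ satisfies the eigenvalue equation of the generalized Laplacian of type II: −ψ''(x) + i c_m · b_c ( 2u(x)ψ'(x) + u'(x)ψ(x) + 2u(x)² ψ(x) ) = β^(II)(x) ψ(x) for all x, where β^(II)(x) = u(x)^{−2} ( w²/a_c² − (3/4) u'(x)² + (1/2) u(x) u''(x) ) − 2u(x)² + i ( 2 w u'(x)/(a_c u(x)²) − (2m/ℏ) w ). In particular β^(II)(x) = β(x) − 2u(x)², where β is the eigenvalue of the generalized Laplacian of type I. -/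
/-!
Writing `ψ = C₀ exp g` with `g = -(1/2) log u + i k ∫ u⁻¹`, `k = w / a_c`, the logarithmic
derivative `G = g' = -u'/(2u) + ik/u` gives `ψ' = Gψ` and `ψ'' = (G² + G')ψ`, so the
eigenvalue equation reduces to an algebraic identity in `u, u', u''`. Since `i c_m b_c = -1`,
the type II operator is the type I operator plus multiplication by `i c_m w⁽ˢ⁾ = -2u²`, which
shifts the eigenvalue by `-2u²`.
-/

open intervalIntegral Complex

section ExpDeriv

variable {𝕜 : Type*} [NontriviallyNormedField 𝕜] [NormedAlgebra 𝕜 ℂ] {g G G' : 𝕜 → ℂ}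

theorem deriv_const_mul_cexp (C : ℂ) (hg : ∀ x, HasDerivAt g (G x) x) :
    deriv (fun x => C * exp (g x)) = fun x => C * exp (g x) * G x := by
  funext x
  rw [((hg x).cexp.const_mul C).deriv, mul_assoc]

theorem deriv_deriv_const_mul_cexp (C : ℂ) (hg : ∀ x, HasDerivAt g (G x) x)
    (hG : ∀ x, HasDerivAt G (G' x) x) (x : 𝕜) :
    deriv (deriv fun x => C * exp (g x)) x = C * exp (g x) * (G x ^ 2 + G' x) := by
  have h : HasDerivAt (fun x => C * exp (g x) * G x)
      (C * (exp (g x) * G x) * G x + C * exp (g x) * G' x) x :=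
    ((hg x).cexp.const_mul C).mul (hG x)
  rw [deriv_const_mul_cexp C hg, h.deriv]
  ring

end ExpDeriv

namespace WKB

variable {u : ℝ → ℝ} (k x₀ : ℝ)

/-- The exponent of `u^(-1/2) exp(ik ∫_{x₀}^x u⁻¹)`. -/
noncomputable def phase (u : ℝ → ℝ) (k x₀ x : ℝ) : ℂ :=
  ((-(1 / 2) * Real.log (u x) : ℝ) : ℂ) + I * k * ((∫ t in x₀..x, (u t)⁻¹ : ℝ) : ℂ)

noncomputable def logDeriv (u : ℝ → ℝ) (k x : ℝ) : ℂ :=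
  ((-(1 / 2) * (deriv u x / u x) : ℝ) : ℂ) + I * k * ((u x)⁻¹ : ℝ)

/-- The eigenvalue `β` of the generalized Laplacian of type I, with `k = w / a_c`. -/
noncomputable def eigenvalue (u : ℝ → ℝ) (k x : ℝ) : ℂ :=
  (((u x ^ 2)⁻¹ * (k ^ 2 - 3 / 4 * deriv u x ^ 2 + 1 / 2 * u x * deriv (deriv u) x) : ℝ) : ℂ)
    + I * ((2 * k * deriv u x / u x ^ 2 - 2 * k : ℝ) : ℂ)

theorem rpow_neg_half_mul_cexp_eq_exp_phase {x : ℝ} (hx : 0 < u x) :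
    ((u x ^ (-(1 / 2 : ℝ)) : ℝ) : ℂ) * exp (I * k * ((∫ t in x₀..x, (u t)⁻¹ : ℝ) : ℂ))
      = exp (phase u k x₀ x) := by
  rw [phase, exp_add, Real.rpow_def_of_pos hx, ofReal_exp, mul_comm (Real.log _)]

theorem hasDerivAt_phase (hu : ContDiff ℝ 1 u) (hpos : ∀ x, 0 < u x) (x : ℝ) :
    HasDerivAt (phase u k x₀) (logDeriv u k x) x := by
  have hinv : Continuous fun t => (u t)⁻¹ := hu.continuous.inv₀ fun t => (hpos t).ne'
  have hint : HasDerivAt (fun x => ∫ t in x₀..x, (u t)⁻¹) (u x)⁻¹ x :=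
    integral_hasDerivAt_right (hinv.intervalIntegrable _ _)
      (hinv.stronglyMeasurableAtFilter _ _) hinv.continuousAt
  have hlog : HasDerivAt (fun y => Real.log (u y)) (deriv u x / u x) x :=
    ((hu.differentiable one_ne_zero x).hasDerivAt).log (hpos x).ne'
  exact (hlog.const_mul _).ofReal_comp.add (hint.ofReal_comp.const_mul _)

theorem hasDerivAt_logDeriv (hu : ContDiff ℝ 2 u) (hpos : ∀ x, 0 < u x) (x : ℝ) :
    HasDerivAt (logDeriv u k)
      (((-(1 / 2) * ((deriv (deriv u) x * u x - deriv u x * deriv u x) / u x ^ 2) : ℝ) : ℂ)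
        + I * k * ((-deriv u x / u x ^ 2 : ℝ) : ℂ)) x := by
  have hu' : HasDerivAt u (deriv u x) x := (hu.differentiable two_ne_zero x).hasDerivAt
  have hu'' : HasDerivAt (deriv u) (deriv (deriv u) x) x :=
    ((hu.iterate_deriv' 1 1).differentiable one_ne_zero x).hasDerivAt
  exact ((hu''.div hu' (hpos x).ne').const_mul _).ofReal_comp.add
    ((hu'.inv (hpos x).ne').ofReal_comp.const_mul _)

theorem riccati_identity {a b c k G G' : ℂ} (z : ℂ) (ha : a ≠ 0)
    (hG : G = -(1 / 2) * (b / a) + I * k * a⁻¹)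
    (hG' : G' = -(1 / 2) * ((c * a - b * b) / a ^ 2) + I * k * (-b / a ^ 2)) :
    -(z * (G ^ 2 + G')) - (2 * a * (z * G) + b * z)
      = ((a ^ 2)⁻¹ * (k ^ 2 - 3 / 4 * b ^ 2 + 1 / 2 * a * c)
          + I * (2 * k * b / a ^ 2 - 2 * k)) * z := by
  subst hG hG'
  field_simp
  ring_nf
  simp only [I_sq]
  ring

theorem eigenvalue_equation {C₀ : ℂ} {ψ : ℝ → ℂ} (hψ : ψ = fun x => C₀ * exp (phase u k x₀ x))
    (hu : ContDiff ℝ 2 u) (hpos : ∀ x, 0 < u x) (x : ℝ) :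
    -deriv (deriv ψ) x - (2 * (u x : ℂ) * deriv ψ x + ((deriv u x : ℝ) : ℂ) * ψ x)
      = eigenvalue u k x * ψ x := by
  have hphase := hasDerivAt_phase k x₀ (hu.of_le (by norm_num)) hpos
  subst hψ
  rw [deriv_deriv_const_mul_cexp C₀ hphase (hasDerivAt_logDeriv k hu hpos),
    deriv_const_mul_cexp C₀ hphase]
  simp only [logDeriv, eigenvalue]
  push_cast
  exact riccati_identity _ (ofReal_ne_zero.mpr (hpos x).ne') rfl rfl

end WKB

open WKB in
/-- The eigenfunction `ψ` of the G-dynamics of type I satisfies the eigenvalue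
equation `−ψ'' + i c_m ŵ⁽ʳⁱ⁾ψ = β⁽ᴵᴵ⁾ψ` of the generalized Laplacian of type II,
where `β⁽ᴵᴵ⁾ = u⁻²(w²/a_c² − (3/4)u'² + (1/2)uu'') − 2u²
 + i(2wu'/(a_cu²) − (2m/ℏ)w)`; in particular `β⁽ᴵᴵ⁾(x) = β(x) − 2u(x)²`, with `β`
the eigenvalue of the generalized Laplacian of type I. -/
theorem stmt_15 (ℏ m : ℝ) (hℏ : 0 < ℏ) (hm : 0 < m)
    (b_c : ℂ) (hb_c : b_c = -Complex.I * ℏ / (2 * m))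
    (a_c : ℝ) (ha_c : a_c = ℏ / m)
    (c_m : ℝ) (hc_m : c_m = -2 * m / ℏ)
    (u : ℝ → ℝ) (hu : ContDiff ℝ 2 u) (hupos : ∀ x, 0 < u x)
    (w : ℝ) (C₀ : ℂ) (x₀ : ℝ) (ψ : ℝ → ℂ)
    (hψ : ψ = fun x => C₀ * (((u x) ^ (-(1 / 2 : ℝ)) : ℝ) : ℂ) *
      Complex.exp (Complex.I * ((w / a_c : ℝ) : ℂ) * ((∫ t in x₀..x, (u t)⁻¹ : ℝ) : ℂ)))
    (β : ℝ → ℂ)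
    (hβ : β = fun x =>
      (((((u x) ^ 2)⁻¹ * (w ^ 2 / a_c ^ 2 - 3 / 4 * (deriv u x) ^ 2
          + 1 / 2 * u x * deriv (deriv u) x) : ℝ)) : ℂ)
        + Complex.I * ((2 * w * deriv u x / (a_c * (u x) ^ 2) - 2 * m / ℏ * w : ℝ) : ℂ))
    (βII : ℝ → ℂ)
    (hβII : βII = fun x =>
      (((((u x) ^ 2)⁻¹ * (w ^ 2 / a_c ^ 2 - 3 / 4 * (deriv u x) ^ 2
          + 1 / 2 * u x * deriv (deriv u) x) : ℝ)) : ℂ) - ((2 * (u x) ^ 2 : ℝ) : ℂ)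
        + Complex.I * ((2 * w * deriv u x / (a_c * (u x) ^ 2) - 2 * m / ℏ * w : ℝ) : ℂ)) :
    (∀ x : ℝ, -deriv (deriv ψ) x
        + Complex.I * (c_m : ℂ) *
          (b_c * (2 * (u x : ℂ) * deriv ψ x + ((deriv u x : ℝ) : ℂ) * ψ x
            + 2 * (((u x) ^ 2 : ℝ) : ℂ) * ψ x))
      = βII x * ψ x) ∧
    (∀ x : ℝ, βII x = β x - ((2 * (u x) ^ 2 : ℝ) : ℂ)) := by
  have hshift : ∀ x, βII x = β x - ((2 * (u x) ^ 2 : ℝ) : ℂ) := fun x => by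
    simp only [hβ, hβII]; ring
  refine ⟨fun x => ?_, hshift⟩
  set k := w / a_c
  have hψk : ψ = fun x => C₀ * exp (phase u k x₀ x) := by
    funext x
    simp only [hψ]
    rw [mul_assoc, rpow_neg_half_mul_cexp_eq_exp_phase k x₀ (hupos x)]
  have hβk : β x = eigenvalue u k x := by
    simp only [hβ, eigenvalue, k, ha_c]
    congr 3 <;> field_simp
  have hcoef : I * (c_m : ℂ) * b_c = -1 := by
    have : (ℏ : ℂ) ≠ 0 := ofReal_ne_zero.mpr hℏ.ne'
    have : (m : ℂ) ≠ 0 := ofReal_ne_zero.mpr hm.ne'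
    rw [hb_c, hc_m]; push_cast; field_simp; linear_combination I_sq
  calc -deriv (deriv ψ) x + I * c_m * (b_c * (2 * (u x : ℂ) * deriv ψ x
          + ((deriv u x : ℝ) : ℂ) * ψ x + 2 * (((u x) ^ 2 : ℝ) : ℂ) * ψ x))
      = (-deriv (deriv ψ) x - (2 * (u x : ℂ) * deriv ψ x + ((deriv u x : ℝ) : ℂ) * ψ x))
          - ((2 * (u x) ^ 2 : ℝ) : ℂ) * ψ x := by
        rw [← mul_assoc, hcoef]; push_cast; ring
    _ = βII x * ψ x := by
        rw [eigenvalue_equation k x₀ hψk hu hupos x, hshift, hβk]; ring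
end
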